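/- arXiv:2601.15915 — 2 statements merged into one kernel-verified Lean document; each statement's English description precedes it below -/
import Mathlib

section
/- Let $\mathcal{C}\subseteq\mathbb{R}^d$, and suppose $f$ is bounded above by $M_f$. Define $s_N := \sup_{\bm{w}\in\mathcal{C}} G_N(\bm{w})$ with $G_N(\bm{w}) = \mathbb{E}_{\bm{x}\sim\mathcal{D}}[e^{N f_{\bm{w}}(\bm{x})}]$. Then $\lim_{N\to\infty}\frac{1}{N}\log s_N = \sup_{\bm{w}\in\mathcal{C}}\Psi(\bm{w})$, where $\Psi(\bm{w})$ is the essential supremum of $f_{\bm{w}}(\bm{x})$ under $\mathcal{D}$. -/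
/-!
Almost surely `f w ≤ Ψ w`, so `G_N(w) ≤ exp (N Ψ w) ≤ exp (N sup_C Ψ)` for `N ≥ 0`, which bounds
`log s_N / N` above by `sup_C Ψ` for every `N > 0`. Conversely `log s_N / N ≥ log G_N(w) / N → Ψ w`
for each `w ∈ C`, so every `Ψ w` is an asymptotic lower bound, and hence so is `sup_C Ψ`.
-/

open MeasureTheory Real Filter Set Topology

theorem tendsto_csSup_of_eventually_le_of_forall_tendsto_le {α β : Type*}
    [ConditionallyCompleteLinearOrder β] [TopologicalSpace β] [OrderTopology β]
    {l : Filter α} {u : α → β} {S : Set β} (hS : S.Nonempty)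
    (hle : ∀ᶠ N in l, u N ≤ sSup S)
    (hge : ∀ a ∈ S, ∃ v : α → β, Tendsto v l (𝓝 a) ∧ v ≤ᶠ[l] u) :
    Tendsto u l (𝓝 (sSup S)) := by
  refine tendsto_order.2 ⟨fun b hb => ?_, fun b hb => ?_⟩
  · obtain ⟨a, haS, hba⟩ := exists_lt_of_lt_csSup hS hb
    obtain ⟨v, hv, hvu⟩ := hge a haS
    filter_upwards [hv.eventually_const_lt hba, hvu] with N hbv hvu using hbv.trans_le hvu
  · filter_upwards [hle] with N h using h.trans_lt hb

theorem tendsto_log_sSup_image_div {ι : Type*} {G : ι → ℝ → ℝ} {Ψ : ι → ℝ} {C : Set ι}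
    (hC : C.Nonempty) (hΨ : BddAbove (Ψ '' C))
    (hpos : ∀ N > 0, ∀ w ∈ C, 0 < G w N) (hle : ∀ N > 0, ∀ w ∈ C, G w N ≤ exp (N * Ψ w))
    (hlim : ∀ w ∈ C, Tendsto (fun N => log (G w N) / N) atTop (𝓝 (Ψ w))) :
    Tendsto (fun N => log (sSup ((G · N) '' C)) / N) atTop (𝓝 (sSup (Ψ '' C))) := by
  have hG_le : ∀ N > 0, ∀ w ∈ C, G w N ≤ exp (N * sSup (Ψ '' C)) := fun N hN w hw =>
    (hle N hN w hw).trans <| exp_le_exp.2 <|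
      mul_le_mul_of_nonneg_left (le_csSup hΨ (mem_image_of_mem Ψ hw)) hN.le
  have hG_le_sSup : ∀ N > 0, ∀ w ∈ C, G w N ≤ sSup ((G · N) '' C) := fun N hN w hw =>
    le_csSup ⟨_, forall_mem_image.2 (hG_le N hN)⟩ (mem_image_of_mem (G · N) hw)
  refine tendsto_csSup_of_eventually_le_of_forall_tendsto_le (hC.image Ψ) ?_ ?_
  · filter_upwards [eventually_gt_atTop 0] with N hN
    obtain ⟨w, hw⟩ := hC
    rw [div_le_iff₀ hN, mul_comm,
      log_le_iff_le_exp ((hpos N hN w hw).trans_le (hG_le_sSup N hN w hw))]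
    exact csSup_le ⟨_, mem_image_of_mem _ hw⟩ (forall_mem_image.2 (hG_le N hN))
  · rintro _ ⟨w, hw, rfl⟩
    refine ⟨_, hlim w hw, ?_⟩
    filter_upwards [eventually_gt_atTop 0] with N hN
    exact div_le_div_of_nonneg_right
      (log_le_log (hpos N hN w hw) (hG_le_sSup N hN w hw)) hN.le

section EssSup

variable {α : Type*} {m : MeasurableSpace α} {μ : Measure α}

theorem essSup_eq_sInf_measure_le_eq_one {β : Type*} [ConditionallyCompleteLinearOrder β]
    [TopologicalSpace β] [OrderClosedTopology β] [MeasurableSpace β] [OpensMeasurableSpace β]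
    [IsProbabilityMeasure μ] {g : α → β} (hg : AEMeasurable g μ) :
    essSup g μ = sInf {a | μ {x | g x ≤ a} = 1} := by
  rw [essSup_eq_sInf]
  congr 1
  ext a
  change μ (g ⁻¹' Ioi a) = 0 ↔ μ (g ⁻¹' Iic a) = 1
  rw [← prob_compl_eq_zero_iff₀ (hg.nullMeasurable measurableSet_Iic), ← preimage_compl, compl_Iic]

theorem integrable_exp_mul_of_ae_le [IsFiniteMeasure μ] {g : α → ℝ} {M N : ℝ}
    (hg : AEMeasurable g μ) (hgM : ∀ᵐ x ∂μ, g x ≤ M) (hN : 0 ≤ N) :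
    Integrable (fun x => exp (N * g x)) μ := by
  refine (integrable_const (exp (N * M))).mono' (hg.const_mul N).exp.aestronglyMeasurable ?_
  filter_upwards [hgM] with x hx
  rw [norm_of_nonneg (exp_pos _).le]
  exact exp_le_exp.2 (mul_le_mul_of_nonneg_left hx hN)

theorem integral_exp_mul_le_exp_mul_essSup [IsProbabilityMeasure μ] {g : α → ℝ} {N : ℝ}
    (hg : IsBoundedUnder (· ≤ ·) (ae μ) g) (hN : 0 ≤ N) :
    ∫ x, exp (N * g x) ∂μ ≤ exp (N * essSup g μ) := by
  calc ∫ x, exp (N * g x) ∂μ ≤ ∫ _, exp (N * essSup g μ) ∂μ := by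
        refine integral_mono_of_nonneg (ae_of_all _ fun x => (exp_pos _).le)
          (integrable_const _) ?_
        filter_upwards [ae_le_essSup hg] with x hx
        exact exp_le_exp.2 (mul_le_mul_of_nonneg_left hx hN)
    _ = exp (N * essSup g μ) := by simp

end EssSup

/-- the normalized log of `s_N = sup_{w ∈ C} G_N(w)` converges to
`sup_{w ∈ C} Ψ(w)`, where `Ψ(w)` is the essential supremum of `f_w(x)` under `D`. -/
theorem log_sup_moment_tendsto_sup_essSup
    (d p : ℕ)
    (f : EuclideanSpace ℝ (Fin d) → EuclideanSpace ℝ (Fin p) → ℝ)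
    (D : Measure (EuclideanSpace ℝ (Fin p))) [IsProbabilityMeasure D]
    (hmeas : ∀ w, Measurable (f w))
    (Mf : ℝ) (hbound : ∀ w x, f w x ≤ Mf)
    (C : Set (EuclideanSpace ℝ (Fin d))) (hC : C.Nonempty)
    (Ψ : EuclideanSpace ℝ (Fin d) → ℝ)
    (hΨ : ∀ w, Ψ w = sInf {a : ℝ | D {x | f w x ≤ a} = 1})
    (hΨfin : BddAbove (Ψ '' C))
    (hlim : ∀ w, Filter.Tendsto
      (fun N : ℝ => Real.log (∫ x, Real.exp (N * f w x) ∂D) / N)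
      Filter.atTop (nhds (Ψ w))) :
    Filter.Tendsto
      (fun N : ℝ =>
        Real.log (sSup ((fun w => ∫ x, Real.exp (N * f w x) ∂D) '' C)) / N)
      Filter.atTop (nhds (sSup (Ψ '' C))) := by
  have hΨ_essSup : ∀ w, Ψ w = essSup (f w) D := fun w =>
    (hΨ w).trans (essSup_eq_sInf_measure_le_eq_one (hmeas w).aemeasurable).symm
  refine tendsto_log_sSup_image_div hC hΨfin (fun N hN w _ => integral_exp_pos ?_)
    (fun N hN w _ => ?_) (fun w _ => hlim w)
  · exact integrable_exp_mul_of_ae_le (hmeas w).aemeasurable (ae_of_all _ (hbound w)) hN.le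
  · rw [hΨ_essSup w]
    exact integral_exp_mul_le_exp_mul_essSup (isBoundedUnder_of ⟨Mf, hbound w⟩) hN.le
end

section
/- Let $g:\mathbb{R}^d\to(0,\infty)$ satisfy $g(\bm{w})\ge 1$ for all $\bm{w}\in B(\bm{w}^*;\delta')$, where $0<\delta'<\delta$. Define $H(\bm{\mu}) = (\sqrt{2\pi}\sigma)^{-d}\int_{\bm{w}\in B(\bm{w}^*;\delta)} g(\bm{w})e^{-\|\bm{w}-\bm{\mu}\|^2/(2\sigma^2)}d\bm{w}$. Then for any $M>0$, any $\bm{\mu}$ with $\|\bm{\mu}\|\le M$ and $|\mu_i - w_i^*|>\delta$ for coordinate $i$, $\left|\frac{\partial H(\bm{\mu})}{\partial\mu_i}\right| \ge (\delta-\delta')\, e^{-M^2/\sigma^2}\, V(\delta',d,\sigma)$, where $V(\delta',d,\sigma) := \frac{1}{(\sqrt{2\pi})^d\sigma^{d+2}}\int_{\bm{w}\in B(\bm{w}^*;\delta')} e^{-\|\bm{w}\|^2/\sigma^2}d\bm{w} > 0$. -/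
open MeasureTheory Real Metric

set_option maxHeartbeats 1000000
set_option synthInstance.maxHeartbeats 400000


lemma gauss_hasFDerivAt {d : ℕ} (g : EuclideanSpace ℝ (Fin d) → ℝ) (σ : ℝ) (hσ : 0 < σ)
    (w x : EuclideanSpace ℝ (Fin d)) :
    HasFDerivAt (fun ν => g w * Real.exp (-‖w - ν‖ ^ 2 / (2 * σ ^ 2)))
      ((g w * Real.exp (-‖w - x‖ ^ 2 / (2 * σ ^ 2)) / σ ^ 2) • (innerSL ℝ (w - x))) x := by
  have h1 : HasFDerivAt (fun ν : EuclideanSpace ℝ (Fin d) => w - ν)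
      (-(ContinuousLinearMap.id ℝ _)) x := (hasFDerivAt_id x).const_sub w
  have h2 := (((h1.norm_sq.neg.const_mul ((2 * σ ^ 2)⁻¹)).exp).const_mul (g w))
  convert (config := {preTransparency := .default}) h2 using 1
  · funext ν
    rw [div_eq_inv_mul]
    rfl
  · ext y
    have hσ2 : σ ^ 2 ≠ 0 := by positivity
    simp only [div_eq_inv_mul, ContinuousLinearMap.smul_apply, smul_eq_mul,
      ContinuousLinearMap.neg_apply, ContinuousLinearMap.comp_apply,
      ContinuousLinearMap.coe_smul', Pi.smul_apply, ContinuousLinearMap.id_apply]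
    simp only [Pi.neg_apply, map_neg, two_smul]
    field_simp
    ring

lemma coord_abs_le_norm {d : ℕ} (x : EuclideanSpace ℝ (Fin d)) (i : Fin d) : |x i| ≤ ‖x‖ := by
  have : x i = inner ℝ x (EuclideanSpace.single i (1:ℝ)) := by
    rw [EuclideanSpace.inner_single_right]; simp
  rw [this]
  calc |inner ℝ x (EuclideanSpace.single i (1:ℝ))| ≤ ‖x‖ * ‖EuclideanSpace.single i (1:ℝ)‖ :=
        abs_real_inner_le_norm _ _
    _ = ‖x‖ := by simp


/-- lower bound on the partial derivatives of the main part
`H(μ) = (√(2π)σ)^{-d} ∫_{B(w*;δ)} g(w) e^{-‖w-μ‖²/(2σ²)} dw`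
when `g ≥ 1` on `B(w*;δ')`, `‖μ‖ ≤ M`, and `|μ_i - w*_i| > δ`. -/
theorem main_integral_partial_deriv_lower_bound
    (d : ℕ)
    (g : EuclideanSpace ℝ (Fin d) → ℝ)
    (hgmeas : Measurable g)
    (hgpos : ∀ w, 0 < g w)
    (wstar : EuclideanSpace ℝ (Fin d)) (δ δ' σ M : ℝ)
    (hδ' : 0 < δ') (hδ : δ' < δ) (hσ : 0 < σ) (hM : 0 < M)
    (hg1 : ∀ w ∈ Metric.ball wstar δ', 1 ≤ g w)
    (hint : ∀ μ : EuclideanSpace ℝ (Fin d),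
      IntegrableOn (fun w => g w * Real.exp (-‖w - μ‖ ^ 2 / (2 * σ ^ 2)))
        (Metric.ball wstar δ))
    (μ : EuclideanSpace ℝ (Fin d)) (i : Fin d)
    (hμM : ‖μ‖ ≤ M) (hμi : |μ i - wstar i| > δ) :
    (δ - δ') * Real.exp (-M ^ 2 / σ ^ 2) *
        ((Real.sqrt (2 * Real.pi) ^ d * σ ^ (d + 2))⁻¹ *
          ∫ w in Metric.ball wstar δ', Real.exp (-‖w‖ ^ 2 / σ ^ 2)) ≤
      |fderiv ℝ
        (fun ν : EuclideanSpace ℝ (Fin d) =>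
          ((Real.sqrt (2 * Real.pi) * σ) ^ d)⁻¹ *
            ∫ w in Metric.ball wstar δ, g w * Real.exp (-‖w - ν‖ ^ 2 / (2 * σ ^ 2)))
        μ (EuclideanSpace.single i 1)| ∧
    0 < (Real.sqrt (2 * Real.pi) ^ d * σ ^ (d + 2))⁻¹ *
          ∫ w in Metric.ball wstar δ', Real.exp (-‖w‖ ^ 2 / σ ^ 2) := by
  have hσ2 : (0:ℝ) < σ ^ 2 := by positivity
  set K := Metric.ball wstar δ with hK
  set K' := Metric.ball wstar δ' with hK'
  set c : ℝ := (Real.sqrt (2 * Real.pi) * σ) ^ d with hc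
  have hsq : (0:ℝ) < Real.sqrt (2 * Real.pi) := Real.sqrt_pos.mpr (by positivity)
  have hcpos : 0 < c := by positivity
  set R : ℝ := δ + (‖wstar‖ + M) + 1 with hR
  have hδpos : (0:ℝ) < δ := hδ'.trans hδ
  have hRpos : 0 < R := by positivity
  set F' : EuclideanSpace ℝ (Fin d) → EuclideanSpace ℝ (Fin d) →
      (EuclideanSpace ℝ (Fin d) →L[ℝ] ℝ) := fun x w =>
    (g w * Real.exp (-‖w - x‖ ^ 2 / (2 * σ ^ 2)) / σ ^ 2) • (innerSL ℝ (w - x)) with hF'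
  set bound : EuclideanSpace ℝ (Fin d) → ℝ := fun w =>
    (R / σ ^ 2) * Real.exp (R ^ 2 / (2 * σ ^ 2)) *
      (g w * Real.exp (-‖w - μ‖ ^ 2 / (2 * σ ^ 2))) with hbound
  have hdist : ∀ w ∈ K, ∀ x ∈ Metric.ball μ 1, ‖w - x‖ ≤ R := by
    intro w hw x hx
    have h1 : ‖w - wstar‖ < δ := by rwa [← dist_eq_norm, ← mem_ball]
    have h2 : ‖μ - x‖ < 1 := by rwa [← dist_eq_norm, ← mem_ball']
    have h3 : ‖wstar - μ‖ ≤ ‖wstar‖ + M := (norm_sub_le _ _).trans (by gcongr)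
    calc ‖w - x‖ = ‖(w - wstar) + (wstar - μ) + (μ - x)‖ := by abel_nf
      _ ≤ ‖(w - wstar) + (wstar - μ)‖ + ‖μ - x‖ := norm_add_le _ _
      _ ≤ (‖w - wstar‖ + ‖wstar - μ‖) + ‖μ - x‖ := by gcongr; exact norm_add_le _ _
      _ ≤ δ + (‖wstar‖ + M) + 1 := by
          have := h1.le; have := h2.le
          gcongr <;> assumption
  have hexpc : ∀ x : EuclideanSpace ℝ (Fin d),
      Continuous fun w : EuclideanSpace ℝ (Fin d) =>
        Real.exp (-‖w - x‖ ^ 2 / (2 * σ ^ 2)) := by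
    intro x; fun_prop
  have hF'norm : ∀ x w : EuclideanSpace ℝ (Fin d), ‖F' x w‖
      = g w * Real.exp (-‖w - x‖ ^ 2 / (2 * σ ^ 2)) / σ ^ 2 * ‖w - x‖ := by
    intro x w
    have : F' x w = (g w * Real.exp (-‖w - x‖ ^ 2 / (2 * σ ^ 2)) / σ ^ 2) •
        (innerSL ℝ (w - x)) := rfl
    rw [this, norm_smul (g w * Real.exp (-‖w - x‖ ^ 2 / (2 * σ ^ 2)) / σ ^ 2)
        (innerSL ℝ (w - x)), innerSL_apply_norm, Real.norm_eq_abs,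
      abs_of_pos (div_pos (mul_pos (hgpos w) (Real.exp_pos _)) hσ2)]
  have h_bound : ∀ᵐ w ∂(volume.restrict K), ∀ x ∈ Metric.ball μ 1, ‖F' x w‖ ≤ bound w := by
    filter_upwards [ae_restrict_mem measurableSet_ball] with w hw x hx
    rw [hF'norm]
    have hg := (hgpos w).le
    have hwx := hdist w hw x hx
    have hwμ := hdist w hw μ (mem_ball_self one_pos)
    have he1 : Real.exp (-‖w - x‖ ^ 2 / (2 * σ ^ 2)) ≤ 1 := by
      apply Real.exp_le_one_iff.mpr
      exact div_nonpos_iff.mpr (Or.inr ⟨by nlinarith [sq_nonneg ‖w - x‖], by positivity⟩)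
    have he2 : (1:ℝ) ≤ Real.exp (-‖w - μ‖ ^ 2 / (2 * σ ^ 2)) * Real.exp (R ^ 2 / (2 * σ ^ 2)) := by
      rw [← Real.exp_add]
      apply Real.one_le_exp
      rw [← add_div]
      apply div_nonneg _ (by positivity)
      nlinarith [norm_nonneg (w - μ)]
    have h1 : g w * Real.exp (-‖w - x‖ ^ 2 / (2 * σ ^ 2)) / σ ^ 2 * ‖w - x‖
        ≤ g w / σ ^ 2 * R := by
      have e : g w * Real.exp (-‖w - x‖ ^ 2 / (2 * σ ^ 2)) * ‖w - x‖ ≤ g w * R := by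
        calc g w * Real.exp (-‖w - x‖ ^ 2 / (2 * σ ^ 2)) * ‖w - x‖
            ≤ g w * 1 * R := by
              have h0 := Real.exp_pos (-‖w - x‖ ^ 2 / (2 * σ ^ 2))
              gcongr
          _ = g w * R := by ring
      calc g w * Real.exp (-‖w - x‖ ^ 2 / (2 * σ ^ 2)) / σ ^ 2 * ‖w - x‖
          = (g w * Real.exp (-‖w - x‖ ^ 2 / (2 * σ ^ 2)) * ‖w - x‖) / σ ^ 2 := by ring
        _ ≤ (g w * R) / σ ^ 2 := by gcongr
        _ = g w / σ ^ 2 * R := by ring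
    refine h1.trans ?_
    calc g w / σ ^ 2 * R = (R / σ ^ 2) * (g w * 1) := by ring
      _ ≤ (R / σ ^ 2) * (g w * (Real.exp (-‖w - μ‖ ^ 2 / (2 * σ ^ 2))
            * Real.exp (R ^ 2 / (2 * σ ^ 2)))) := by
          apply mul_le_mul_of_nonneg_left _ (by positivity)
          exact mul_le_mul_of_nonneg_left he2 hg
      _ = bound w := by rw [hbound]; ring
  have hbound_int : Integrable bound (volume.restrict K) := (hint μ).const_mul _
  have hF'meas : AEStronglyMeasurable (F' μ) (volume.restrict K) := by
    apply AEStronglyMeasurable.fun_smul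
    · exact ((hgmeas.mul (hexpc μ).measurable).div_const _).aestronglyMeasurable
    · exact ((innerSL ℝ (E := EuclideanSpace ℝ (Fin d))).continuous.comp
        (continuous_id.sub continuous_const)).aestronglyMeasurable
  have hder : HasFDerivAt
      (fun ν : EuclideanSpace ℝ (Fin d) =>
        ∫ w in K, g w * Real.exp (-‖w - ν‖ ^ 2 / (2 * σ ^ 2)))
      (∫ w in K, F' μ w) μ := by
    apply hasFDerivAt_integral_of_dominated_of_fderiv_le (ball_mem_nhds μ one_pos)
    · exact Filter.Eventually.of_forall fun x =>
        (hgmeas.mul (hexpc x).measurable).aestronglyMeasurable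
    · exact hint μ
    · exact hF'meas
    · exact h_bound
    · exact hbound_int
    · exact Filter.Eventually.of_forall fun w x _ => gauss_hasFDerivAt g σ hσ w x
  have hH := hder.const_mul c⁻¹
  have hF'int : Integrable (F' μ) (volume.restrict K) := by
    apply hbound_int.mono' hF'meas
    filter_upwards [h_bound] with w hw
    exact hw μ (mem_ball_self one_pos)
  set φ : EuclideanSpace ℝ (Fin d) → ℝ := fun w =>
    g w * Real.exp (-‖w - μ‖ ^ 2 / (2 * σ ^ 2)) / σ ^ 2 * (w i - μ i) with hφ
  have happly : ∀ w : EuclideanSpace ℝ (Fin d),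
      F' μ w (EuclideanSpace.single i 1) = φ w := by
    intro w
    have : F' μ w = (g w * Real.exp (-‖w - μ‖ ^ 2 / (2 * σ ^ 2)) / σ ^ 2) •
        (innerSL ℝ (w - μ)) := rfl
    rw [this, hφ]
    simp only [ContinuousLinearMap.smul_apply, innerSL_apply_apply, smul_eq_mul]
    congr 1
    rw [EuclideanSpace.inner_single_right]
    simp [PiLp.sub_apply]
  have hfderiv_eq : fderiv ℝ
      (fun ν : EuclideanSpace ℝ (Fin d) =>
        c⁻¹ * ∫ w in K, g w * Real.exp (-‖w - ν‖ ^ 2 / (2 * σ ^ 2))) μ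
      (EuclideanSpace.single i 1) = c⁻¹ * ∫ w in K, φ w := by
    rw [hH.fderiv]
    rw [ContinuousLinearMap.smul_apply, ContinuousLinearMap.integral_apply hF'int]
    simp only [smul_eq_mul]
    congr 1
    exact integral_congr_ae (Filter.Eventually.of_forall happly)
  have hφint : IntegrableOn φ K := by
    have := (ContinuousLinearMap.apply ℝ ℝ
      (EuclideanSpace.single i (1:ℝ))).integrable_comp hF'int
    exact this.congr (Filter.Eventually.of_forall fun w => happly w)
  -- lower-bound machinery
  have habs_coord : ∀ r : ℝ, ∀ w ∈ Metric.ball wstar r, |w i - wstar i| < r := by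
    intro r w hw
    have h1 : ‖w - wstar‖ < r := by rwa [← dist_eq_norm, ← mem_ball]
    have h2 := coord_abs_le_norm (w - wstar) i
    have h3 : (w - wstar) i = w i - wstar i := rfl
    rw [h3] at h2
    linarith
  have hsign : (∀ w ∈ K, φ w ≤ 0) ∨ (∀ w ∈ K, 0 ≤ φ w) := by
    rcases lt_abs.mp hμi with h | h
    · left; intro w hw
      have h2 := abs_lt.mp (habs_coord δ w hw)
      have hfac : (0:ℝ) < g w * Real.exp (-‖w - μ‖ ^ 2 / (2 * σ ^ 2)) / σ ^ 2 :=
        div_pos (mul_pos (hgpos w) (Real.exp_pos _)) hσ2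
      have ht : w i - μ i ≤ 0 := by linarith [h2.2]
      have hrfl : φ w = g w * Real.exp (-‖w - μ‖ ^ 2 / (2 * σ ^ 2)) / σ ^ 2 * (w i - μ i) := rfl
      rw [hrfl]
      exact mul_nonpos_iff.mpr (Or.inl ⟨hfac.le, ht⟩)
    · right; intro w hw
      have h2 := abs_lt.mp (habs_coord δ w hw)
      have hfac : (0:ℝ) < g w * Real.exp (-‖w - μ‖ ^ 2 / (2 * σ ^ 2)) / σ ^ 2 :=
        div_pos (mul_pos (hgpos w) (Real.exp_pos _)) hσ2
      have ht : 0 ≤ w i - μ i := by linarith [h2.1]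
      exact mul_nonneg hfac.le ht
  have hcont : Continuous fun w : EuclideanSpace ℝ (Fin d) => Real.exp (-‖w‖ ^ 2 / σ ^ 2) := by
    fun_prop
  have hintexp : IntegrableOn (fun w => Real.exp (-‖w‖ ^ 2 / σ ^ 2)) K' :=
    (hcont.locallyIntegrable.integrableOn_isCompact
      (isCompact_closedBall wstar δ')).mono_set ball_subset_closedBall
  have hIpos : 0 < ∫ w in K', Real.exp (-‖w‖ ^ 2 / σ ^ 2) := by
    rw [setIntegral_pos_iff_support_of_nonneg_ae
      (Filter.Eventually.of_forall fun w => (Real.exp_pos _).le) hintexp]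
    have hsupp : Function.support (fun w : EuclideanSpace ℝ (Fin d) =>
        Real.exp (-‖w‖ ^ 2 / σ ^ 2)) = Set.univ :=
      Set.eq_univ_iff_forall.mpr fun w => (Real.exp_pos _).ne'
    rw [hsupp, Set.univ_inter]
    exact measure_ball_pos volume wstar hδ'
  have hlow : ∀ w ∈ K', ((δ - δ') * Real.exp (-M ^ 2 / σ ^ 2) / σ ^ 2)
      * Real.exp (-‖w‖ ^ 2 / σ ^ 2) ≤ |φ w| := by
    intro w hw
    have hgw := hg1 w hw
    have h2 := habs_coord δ' w hw
    have h3 : δ - δ' ≤ |w i - μ i| := by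
      have h4 := abs_sub_abs_le_abs_sub (μ i - wstar i) (w i - wstar i)
      have h5 : (μ i - wstar i) - (w i - wstar i) = μ i - w i := by ring
      rw [h5] at h4
      rw [abs_sub_comm (w i) (μ i)]
      linarith
    have h4 : Real.exp (-M ^ 2 / σ ^ 2) * Real.exp (-‖w‖ ^ 2 / σ ^ 2)
        ≤ Real.exp (-‖w - μ‖ ^ 2 / (2 * σ ^ 2)) := by
      rw [← Real.exp_add]
      apply Real.exp_le_exp.mpr
      rw [← add_div, div_le_div_iff₀ (by positivity) (by positivity)]
      have k1 : ‖w - μ‖ ^ 2 ≤ (‖w‖ + ‖μ‖) ^ 2 :=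
        pow_le_pow_left₀ (norm_nonneg _) (norm_sub_le w μ) 2
      have k2 : ‖μ‖ ^ 2 ≤ M ^ 2 := pow_le_pow_left₀ (norm_nonneg μ) hμM 2
      nlinarith [sq_nonneg (‖w‖ - ‖μ‖), norm_nonneg w, norm_nonneg μ]
    have hfabs : |φ w| = g w * Real.exp (-‖w - μ‖ ^ 2 / (2 * σ ^ 2)) / σ ^ 2
        * |w i - μ i| := by
      rw [hφ, abs_mul, abs_of_pos (div_pos (mul_pos (hgpos w) (Real.exp_pos _)) hσ2)]
    rw [hfabs]
    have key : (δ - δ') * (Real.exp (-M ^ 2 / σ ^ 2) * Real.exp (-‖w‖ ^ 2 / σ ^ 2))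
        ≤ g w * (Real.exp (-‖w - μ‖ ^ 2 / (2 * σ ^ 2)) * |w i - μ i|) := by
      have k1 : (δ - δ') * (Real.exp (-M ^ 2 / σ ^ 2) * Real.exp (-‖w‖ ^ 2 / σ ^ 2))
          ≤ |w i - μ i| * Real.exp (-‖w - μ‖ ^ 2 / (2 * σ ^ 2)) :=
        mul_le_mul h3 h4 (by positivity) (abs_nonneg _)
      have k2 : |w i - μ i| * Real.exp (-‖w - μ‖ ^ 2 / (2 * σ ^ 2))
          ≤ g w * (Real.exp (-‖w - μ‖ ^ 2 / (2 * σ ^ 2)) * |w i - μ i|) := by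
        rw [show g w * (Real.exp (-‖w - μ‖ ^ 2 / (2 * σ ^ 2)) * |w i - μ i|)
          = g w * (|w i - μ i| * Real.exp (-‖w - μ‖ ^ 2 / (2 * σ ^ 2))) from by ring]
        exact le_mul_of_one_le_left (by positivity) hgw
      linarith
    calc ((δ - δ') * Real.exp (-M ^ 2 / σ ^ 2) / σ ^ 2) * Real.exp (-‖w‖ ^ 2 / σ ^ 2)
        = ((δ - δ') * (Real.exp (-M ^ 2 / σ ^ 2) * Real.exp (-‖w‖ ^ 2 / σ ^ 2))) / σ ^ 2 := by
          ring
      _ ≤ (g w * (Real.exp (-‖w - μ‖ ^ 2 / (2 * σ ^ 2)) * |w i - μ i|)) / σ ^ 2 := by gcongr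
      _ = g w * Real.exp (-‖w - μ‖ ^ 2 / (2 * σ ^ 2)) / σ ^ 2 * |w i - μ i| := by ring
  have hφint' : IntegrableOn φ K' := hφint.mono_set (ball_subset_ball hδ.le)
  have hlowint : IntegrableOn (fun w => ((δ - δ') * Real.exp (-M ^ 2 / σ ^ 2) / σ ^ 2)
      * Real.exp (-‖w‖ ^ 2 / σ ^ 2)) K' := hintexp.const_mul _
  have step1 : ∫ w in K', ((δ - δ') * Real.exp (-M ^ 2 / σ ^ 2) / σ ^ 2)
      * Real.exp (-‖w‖ ^ 2 / σ ^ 2) ≤ ∫ w in K', |φ w| :=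
    setIntegral_mono_on hlowint hφint'.abs measurableSet_ball hlow
  have step2 : ∫ w in K', |φ w| ≤ ∫ w in K, |φ w| :=
    setIntegral_mono_set hφint.abs (Filter.Eventually.of_forall fun w => abs_nonneg _)
      ((ball_subset_ball hδ.le).eventuallyLE)
  have step3 : ∫ w in K, |φ w| = |∫ w in K, φ w| := by
    rcases hsign with h | h
    · rw [abs_of_nonpos (setIntegral_nonpos measurableSet_ball h), ← integral_neg]
      exact setIntegral_congr_fun measurableSet_ball fun w hw => abs_of_nonpos (h w hw)
    · rw [abs_of_nonneg (setIntegral_nonneg measurableSet_ball h)]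
      exact setIntegral_congr_fun measurableSet_ball fun w hw => abs_of_nonneg (h w hw)
  have step0 : ∫ w in K', ((δ - δ') * Real.exp (-M ^ 2 / σ ^ 2) / σ ^ 2)
      * Real.exp (-‖w‖ ^ 2 / σ ^ 2)
      = ((δ - δ') * Real.exp (-M ^ 2 / σ ^ 2) / σ ^ 2)
        * ∫ w in K', Real.exp (-‖w‖ ^ 2 / σ ^ 2) := integral_const_mul _ _
  have hcc : c⁻¹ / σ ^ 2 = (Real.sqrt (2 * Real.pi) ^ d * σ ^ (d + 2))⁻¹ := by
    rw [hc, mul_pow, pow_add]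
    field_simp
  constructor
  · rw [hfderiv_eq, abs_mul, abs_of_pos (inv_pos.mpr hcpos)]
    have main : ((δ - δ') * Real.exp (-M ^ 2 / σ ^ 2) / σ ^ 2)
        * ∫ w in K', Real.exp (-‖w‖ ^ 2 / σ ^ 2) ≤ |∫ w in K, φ w| := by
      rw [← step0]
      exact step1.trans (step2.trans_eq step3)
    calc (δ - δ') * Real.exp (-M ^ 2 / σ ^ 2) *
          ((Real.sqrt (2 * Real.pi) ^ d * σ ^ (d + 2))⁻¹ *
            ∫ w in K', Real.exp (-‖w‖ ^ 2 / σ ^ 2))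
        = c⁻¹ * (((δ - δ') * Real.exp (-M ^ 2 / σ ^ 2) / σ ^ 2)
            * ∫ w in K', Real.exp (-‖w‖ ^ 2 / σ ^ 2)) := by
          rw [← hcc]; ring
      _ ≤ c⁻¹ * |∫ w in K, φ w| := by
          apply mul_le_mul_of_nonneg_left main (by positivity)
  · exact mul_pos (inv_pos.mpr (by positivity)) hIpos
end
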